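/- arXiv:2108.04995 — 2 statements merged into one kernel-verified Lean document; each statement's English description precedes it below -/
import Mathlib

section
/- Let (σ1, σ3, τ) be a wheel frame of a code C on n neurons. Then for every realization U of C in ℝ^d there exists σ2 ⊆ [n] such that the tuple (σ1, σ2, σ3, τ) satisfies the wheel conditions W(i), W(ii), W(iii) for U. Consequently C is non-convex: for no dimension d does C admit a realization in ℝ^d by convex open sets. -/
/-!
Let `x ∈ U_{σ1} ∩ U_τ` and `y ∈ U_{σ3} ∩ U_τ`. If `U_τ` is convex, the segment `[x, y]` stays in
`U_τ`, which F(iv) covers by the open sets `⋃_{i ∈ σ1} U_i` and `⋃_{j ∈ σ3} U_j`; by connectedness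
some `z ∈ [x, y]` lies in both. So `ω`, the part in `σ1 ∪ σ3` of the codeword of `z`, meets σ1 and
σ3, and `ω ∪ τ` is a face. By F(i), `U_{σ1} ∩ U_ω = U_{σ3} ∩ U_ω = U_{σ1 ∪ σ3}`, which misses
`U_τ` by F(ii): `σ2 = ω` gives a wheel. If `U_τ` is not convex, W(iii) is vacuous and `σ2 = σ1 ∪ σ3` does.

A convex realization has no wheel. With `A = U_{σ1}`, `B = U_{σ3}`, `Z = U_{σ2}` and `z ∈ Z` on
`[x, y]` outside `A`, the segment from `z` to a point `q ∈ A ∩ B ∩ Z` crosses the frontier of `A`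
at some `w ∈ Z`, so `w ∉ B`. But `w` lies in the triangle `x y q`, hence on `[x, b]` for some
`b ∈ [y, q] ⊆ B`, and between `b` and points of `]x, w[ ∩ Z ⊆ A ∩ Z ⊆ B`; so `w ∈ B`.
-/

namespace NeuralCode

/-- `USet U σ` is `U_σ = ⋂ i ∈ σ, U i` (the whole space when `σ = ∅`). -/
def USet {ι : Type*} {d : ℕ} (U : ι → Set (EuclideanSpace ℝ (Fin d))) (σ : Finset ι) :
    Set (EuclideanSpace ℝ (Fin d)) :=
  ⋂ i ∈ σ, U i

/-- The atom of the codeword `c` in the family `U`. -/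
def codeAtom {ι : Type*} {d : ℕ} (U : ι → Set (EuclideanSpace ℝ (Fin d))) (c : Finset ι) :
    Set (EuclideanSpace ℝ (Fin d)) :=
  USet U c \ ⋃ j ∉ c, U j

/-- The family `U` (of open sets) is a realization of the code `C`. -/
def IsRealization {ι : Type*} {d : ℕ} (C : Set (Finset ι))
    (U : ι → Set (EuclideanSpace ℝ (Fin d))) : Prop :=
  (∀ i, IsOpen (U i)) ∧ ∀ c : Finset ι, c ∈ C ↔ (codeAtom U c).Nonempty

/-- The code `C` is convex: for some dimension `d` it admits a realization in `ℝ^d`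
by convex open sets. -/
def IsConvexCode {ι : Type*} (C : Set (Finset ι)) : Prop :=
  ∃ (d : ℕ) (U : ι → Set (EuclideanSpace ℝ (Fin d))),
    IsRealization C U ∧ ∀ i, Convex ℝ (U i)

/-- The trunk of `σ` in `C`: the set of codewords containing `σ`. -/
def trunk {ι : Type*} (C : Set (Finset ι)) (σ : Finset ι) : Set (Finset ι) :=
  {c | c ∈ C ∧ σ ⊆ c}

/-- The neural complex `Δ(C)` of `C`. -/
def neuralComplex {ι : Type*} (C : Set (Finset ι)) : Set (Finset ι) :=
  {σ | ∃ c ∈ C, σ ⊆ c}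

/-- Condition W(i). -/
def WheelWi {ι : Type*} {d : ℕ} (U : ι → Set (EuclideanSpace ℝ (Fin d)))
    (σ1 σ2 σ3 : Finset ι) : Prop :=
  USet U σ1 ∩ USet U σ2 = USet U σ1 ∩ USet U σ2 ∩ USet U σ3 ∧
    USet U σ1 ∩ USet U σ3 = USet U σ1 ∩ USet U σ2 ∩ USet U σ3 ∧
    USet U σ2 ∩ USet U σ3 = USet U σ1 ∩ USet U σ2 ∩ USet U σ3 ∧
    (USet U σ1 ∩ USet U σ2 ∩ USet U σ3).Nonempty

/-- Condition W(ii). -/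
def WheelWii {ι : Type*} {d : ℕ} (U : ι → Set (EuclideanSpace ℝ (Fin d)))
    (σ1 σ2 σ3 τ : Finset ι) : Prop :=
  USet U σ1 ∩ USet U σ2 ∩ USet U σ3 ∩ USet U τ = ∅

/-- Condition W(iii). -/
def WheelWiii {ι : Type*} {d : ℕ} (U : ι → Set (EuclideanSpace ℝ (Fin d)))
    (σ1 σ2 σ3 τ : Finset ι) : Prop :=
  (Convex ℝ (USet U τ) ∧ Convex ℝ (USet U σ1 ∩ USet U τ) ∧
      Convex ℝ (USet U σ2 ∩ USet U τ) ∧ Convex ℝ (USet U σ3 ∩ USet U τ)) →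
    ∃ x ∈ USet U σ1 ∩ USet U τ, ∃ y ∈ USet U σ3 ∩ USet U τ,
      (segment ℝ x y ∩ (USet U σ2 ∩ USet U τ)).Nonempty

/-- Condition W(iii)◦. -/
def WheelWiiiCirc {ι : Type*} {d : ℕ} (U : ι → Set (EuclideanSpace ℝ (Fin d)))
    (σ1 σ2 σ3 τ : Finset ι) : Prop :=
  (USet U σ1 ∩ USet U τ).Nonempty ∧ (USet U σ2 ∩ USet U τ).Nonempty ∧
    (USet U σ3 ∩ USet U τ).Nonempty

/-- `(σ1, σ2, σ3, τ)` is a wheel of the realization `U`. -/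
def IsWheelOfRealization {ι : Type*} {d : ℕ} (U : ι → Set (EuclideanSpace ℝ (Fin d)))
    (σ1 σ2 σ3 τ : Finset ι) : Prop :=
  WheelWi U σ1 σ2 σ3 ∧ WheelWii U σ1 σ2 σ3 τ ∧ WheelWiii U σ1 σ2 σ3 τ

/-- Condition P(i). -/
def CondPi {ι : Type*} [DecidableEq ι] (C : Set (Finset ι)) (σ1 σ2 σ3 : Finset ι) : Prop :=
  σ1 ∪ σ2 ∪ σ3 ∈ neuralComplex C ∧
    trunk C (σ1 ∪ σ2) = trunk C (σ1 ∪ σ2 ∪ σ3) ∧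
    trunk C (σ1 ∪ σ3) = trunk C (σ1 ∪ σ2 ∪ σ3) ∧
    trunk C (σ2 ∪ σ3) = trunk C (σ1 ∪ σ2 ∪ σ3)

/-- Condition P(ii). -/
def CondPii {ι : Type*} [DecidableEq ι] (C : Set (Finset ι)) (σ1 σ2 σ3 τ : Finset ι) : Prop :=
  σ1 ∪ σ2 ∪ σ3 ∪ τ ∉ neuralComplex C

/-- Condition P(iii)◦. -/
def CondPiiiCirc {ι : Type*} [DecidableEq ι] (C : Set (Finset ι)) (σ1 σ2 σ3 τ : Finset ι) :
    Prop :=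
  σ1 ∪ τ ∈ neuralComplex C ∧ σ2 ∪ τ ∈ neuralComplex C ∧ σ3 ∪ τ ∈ neuralComplex C

/-- `(σ1, σ2, σ3, τ)` is a sprocket of `C`. -/
def IsSprocket {ι : Type*} [DecidableEq ι] (C : Set (Finset ι)) (σ1 σ2 σ3 τ : Finset ι) :
    Prop :=
  σ1 ∈ neuralComplex C ∧ σ2 ∈ neuralComplex C ∧ σ3 ∈ neuralComplex C ∧
    τ ∈ neuralComplex C ∧
    CondPi C σ1 σ2 σ3 ∧ CondPii C σ1 σ2 σ3 τ ∧ CondPiiiCirc C σ1 σ2 σ3 τ ∧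
    ∃ ρ1 ∈ neuralComplex C, ∃ ρ3 ∈ neuralComplex C,
      trunk C (σ1 ∪ τ) ⊆ trunk C ρ1 ∧ trunk C (σ3 ∪ τ) ⊆ trunk C ρ3 ∧
      trunk C τ ⊆ trunk C ρ1 ∪ trunk C ρ3 ∧
      trunk C (ρ1 ∪ ρ3 ∪ τ) ⊆ trunk C σ2

/-- `F` is a facet of `Δ(C)`: an inclusion-maximal codeword of `C`. -/
def IsFacet {ι : Type*} (C : Set (Finset ι)) (F : Finset ι) : Prop :=
  F ∈ C ∧ ∀ c ∈ C, F ⊆ c → c = F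

/-- `τ` is a max-intersection face of `Δ(C)`: a face equal to the intersection of two or
more distinct facets. -/
def IsMaxIntersectionFace {ι : Type*} [DecidableEq ι] [Fintype ι] (C : Set (Finset ι))
    (τ : Finset ι) : Prop :=
  τ ∈ neuralComplex C ∧
    ∃ S : Finset (Finset ι), 2 ≤ S.card ∧ (∀ F ∈ S, IsFacet C F) ∧ τ = S.inf id

/-- The link graph of `τ` in `Δ(C)`. -/
def linkGraph {ι : Type*} [DecidableEq ι] (C : Set (Finset ι)) (τ : Finset ι) :
    SimpleGraph {i : ι // i ∉ τ ∧ insert i τ ∈ neuralComplex C} where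
  Adj a b := a ≠ b ∧ τ ∪ {(a : ι), (b : ι)} ∈ neuralComplex C
  symm := ⟨fun a b h => ⟨h.1.symm, by rw [Finset.pair_comm]; exact h.2⟩⟩
  loopless := ⟨fun a h => h.1 rfl⟩

/-- `(σ1, σ2, σ3, τ)` is a wire wheel of `C`. -/
def IsWireWheel {ι : Type*} [DecidableEq ι] (C : Set (Finset ι)) (σ1 σ2 σ3 τ : Finset ι) :
    Prop :=
  σ1 ∈ neuralComplex C ∧ σ2 ∈ neuralComplex C ∧ σ3 ∈ neuralComplex C ∧
    τ ∈ neuralComplex C ∧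
    CondPi C σ1 σ2 σ3 ∧ CondPii C σ1 σ2 σ3 τ ∧ τ ∉ C ∧
    (∀ ω : Finset ι, ω.card = 3 → Disjoint ω τ → τ ∪ ω ∉ neuralComplex C) ∧
    (linkGraph C τ).IsTree ∧
    ∃ v1 v2 v3 : {i : ι // i ∉ τ ∧ insert i τ ∈ neuralComplex C},
      σ1 \ τ = {(v1 : ι)} ∧ σ2 \ τ = {(v2 : ι)} ∧ σ3 \ τ = {(v3 : ι)} ∧
      ∀ p : (linkGraph C τ).Walk v1 v3, p.IsPath → v2 ∈ p.support

/-- `(σ1, σ3, τ)` is a wheel frame of `C`. -/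
def IsWheelFrame {ι : Type*} [DecidableEq ι] (C : Set (Finset ι)) (σ1 σ3 τ : Finset ι) :
    Prop :=
  σ1 ∈ neuralComplex C ∧ σ3 ∈ neuralComplex C ∧ τ ∈ neuralComplex C ∧
    (σ1 ∪ σ3 ∈ neuralComplex C ∧
      ∀ ω : Finset ι, ω ⊆ σ1 ∪ σ3 → ¬ω ⊆ σ1 → ¬ω ⊆ σ3 → ω ∪ τ ∈ neuralComplex C →
        trunk C (σ1 ∪ ω) = trunk C (σ1 ∪ σ3) ∧ trunk C (σ3 ∪ ω) = trunk C (σ1 ∪ σ3)) ∧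
    τ ∪ σ1 ∪ σ3 ∉ neuralComplex C ∧
    σ1 ∪ τ ∈ neuralComplex C ∧ σ3 ∪ τ ∈ neuralComplex C ∧
    σ1 ∩ σ3 = ∅ ∧
    trunk C τ ⊆ ⋃ i ∈ (σ1 ∪ σ3 : Finset ι), trunk C {i}

/-- A subset of `ℝ^d` is top-dimensional: every nonempty intersection with an open set
has nonempty interior. -/
def TopDimensional {d : ℕ} (S : Set (EuclideanSpace ℝ (Fin d))) : Prop :=
  ∀ O : Set (EuclideanSpace ℝ (Fin d)), IsOpen O → (S ∩ O).Nonempty →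
    (interior (S ∩ O)).Nonempty

/-- A realization is top-dimensional if each of its atoms is empty or top-dimensional. -/
def IsTopDimRealization {ι : Type*} {d : ℕ} (U : ι → Set (EuclideanSpace ℝ (Fin d))) :
    Prop :=
  ∀ c : Finset ι, codeAtom U c = ∅ ∨ TopDimensional (codeAtom U c)

/-- `C` is top-dimensionally convex. -/
def IsTopDimConvexCode {ι : Type*} (C : Set (Finset ι)) : Prop :=
  ∃ (d : ℕ) (U : ι → Set (EuclideanSpace ℝ (Fin d))),
    IsRealization C U ∧ IsTopDimRealization U ∧ ∀ i, Convex ℝ (U i)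

/-- The restriction `C|_χ = {c ∩ χ : c ∈ C}`, as a code on the neuron set `χ`. -/
def restrictCode {ι : Type*} [DecidableEq ι] (C : Set (Finset ι)) (χ : Finset ι) :
    Set (Finset {i : ι // i ∈ χ}) :=
  (fun c => c.subtype (· ∈ χ)) '' C

/-- Neuron `j` is trivial in `C`: no codeword contains it. -/
def TrivialNeuron {ι : Type*} (C : Set (Finset ι)) (j : ι) : Prop :=
  ∀ c ∈ C, j ∉ c

/-- Neuron `j` is redundant in `C`. -/
def RedundantNeuron {ι : Type*} [DecidableEq ι] (C : Set (Finset ι)) (j : ι) : Prop :=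
  ¬TrivialNeuron C j ∧ ∃ σ : Finset ι, j ∉ σ ∧ trunk C {j} = trunk C σ

/-- `C` is decomposable with embedded part supported on `φ`. -/
def IsDecomposable {ι : Type*} [DecidableEq ι] [Fintype ι] (C : Set (Finset ι))
    (φ : Finset ι) : Prop :=
  φ ≠ ∅ ∧ φ ≠ Finset.univ ∧
    ∃ ψ : Finset ι, Disjoint φ ψ ∧ ψ ≠ Finset.univ ∧ ψ ∈ C ∧
      ∀ c ∈ C, (c ∩ φ).Nonempty → ∃ φ' ⊆ φ, c = φ' ∪ ψ

end NeuralCode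

open Set

section Segment

variable {𝕜 E : Type*} [Field 𝕜] [LinearOrder 𝕜] [IsStrictOrderedRing 𝕜] [AddCommGroup E]
  [Module 𝕜 E]

theorem exists_mem_segment_of_mem_segment_of_mem_segment {x y z q w : E}
    (hz : z ∈ segment 𝕜 x y) (hw : w ∈ segment 𝕜 z q) :
    ∃ b ∈ segment 𝕜 y q, w ∈ segment 𝕜 x b := by
  have : w ∈ convexJoin 𝕜 {x} (segment 𝕜 y q) := by
    rw [convexJoin_singleton_segment, ← convexJoin_segment_singleton]
    exact segment_subset_convexJoin hz (mem_singleton q) hw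
  simpa using this

end Segment

section ConvexWheel

variable {E : Type*} [AddCommGroup E] [Module ℝ E] [TopologicalSpace E] [IsTopologicalAddGroup E]
  [ContinuousSMul ℝ E]

theorem exists_mem_openSegment_mem_of_isOpen {Z : Set E} (hZ : IsOpen Z) (x : E) {w : E}
    (hw : w ∈ Z) : ∃ v ∈ openSegment ℝ x w, v ∈ Z := by
  have hcont : Continuous (AffineMap.lineMap x w : ℝ → E) := AffineMap.lineMap_continuous
  have hnhds : ∀ᶠ t in nhdsWithin (1 : ℝ) (Iio 1), AffineMap.lineMap x w t ∈ Z :=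
    nhdsWithin_le_nhds (hcont.tendsto' 1 w (by simp) |>.eventually (hZ.mem_nhds hw))
  obtain ⟨t, ht, htZ⟩ := (Filter.Eventually.and (Ioo_mem_nhdsLT zero_lt_one) hnhds).exists
  exact ⟨_, openSegment_eq_image_lineMap ℝ x w ▸ mem_image_of_mem _ ht, htZ⟩

theorem mem_of_mem_segment_of_inter_subset {A B Z : Set E} (hAo : IsOpen A) (hZo : IsOpen Z)
    (hAc : Convex ℝ A) (hBc : Convex ℝ B) (hZc : Convex ℝ Z)
    (hZA : Z ∩ A ⊆ B) (hZB : Z ∩ B ⊆ A) {q x y z : E} (hq : q ∈ A ∩ B ∩ Z)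
    (hx : x ∈ A) (hy : y ∈ B) (hz : z ∈ Z) (hxyz : z ∈ segment ℝ x y) : z ∈ A := by
  by_contra hzA
  obtain ⟨w, ⟨hwA, hwzq⟩, hwA'⟩ : ∃ w ∈ closure A ∩ segment ℝ z q, w ∉ A := by
    by_contra! h
    exact hzA <| (convex_segment z q).isPreconnected.subset_of_closure_inter_subset hAo
      ⟨q, right_mem_segment ℝ z q, hq.1.1⟩ h (left_mem_segment ℝ z q)
  have hwZ : w ∈ Z := hZc.segment_subset hz hq.2 hwzq
  have hwB : w ∉ B := fun hwB => hwA' (hZB ⟨hwZ, hwB⟩)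
  obtain ⟨b, hb, hxwb⟩ := exists_mem_segment_of_mem_segment_of_mem_segment hxyz hwzq
  obtain ⟨v, hvxw, hvZ⟩ := exists_mem_openSegment_mem_of_isOpen hZo x hwZ
  have hvA : v ∈ A := by
    rw [← hAo.interior_eq] at hx ⊢
    exact hAc.openSegment_interior_closure_subset_interior hx hwA hvxw
  have hvwb : w ∈ segment ℝ v b :=
    ((mem_segment_iff_wbtw.1 hxwb).trans_left_right
      (mem_segment_iff_wbtw.1 (openSegment_subset_segment ℝ x w hvxw))).mem_segment
  exact hwB (hBc.segment_subset (hZA ⟨hvZ, hvA⟩) (hBc.segment_subset hy hq.1.2 hb) hvwb)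

end ConvexWheel

namespace NeuralCode

variable {ι : Type*} {d : ℕ} {U : ι → Set (EuclideanSpace ℝ (Fin d))} {C : Set (Finset ι)}

theorem mem_USet {σ : Finset ι} {u : EuclideanSpace ℝ (Fin d)} :
    u ∈ USet U σ ↔ ∀ i ∈ σ, u ∈ U i := by
  simp [USet]

theorem USet_anti : Antitone (USet U) :=
  fun _ _ h => biInter_subset_biInter_left h

theorem USet_union [DecidableEq ι] (σ τ : Finset ι) :
    USet U (σ ∪ τ) = USet U σ ∩ USet U τ :=
  Finset.iInf_union

theorem isOpen_USet (hU : ∀ i, IsOpen (U i)) (σ : Finset ι) : IsOpen (USet U σ) :=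
  isOpen_biInter_finset fun i _ => hU i

theorem convex_USet (hU : ∀ i, Convex ℝ (U i)) (σ : Finset ι) : Convex ℝ (USet U σ) :=
  convex_iInter₂ fun i _ => hU i

theorem IsRealization.USet_nonempty (hR : IsRealization C U) {σ : Finset ι}
    (hσ : σ ∈ neuralComplex C) : (USet U σ).Nonempty := by
  obtain ⟨c, hc, hσc⟩ := hσ
  obtain ⟨u, hu, -⟩ := (hR.2 c).1 hc
  exact ⟨u, USet_anti hσc hu⟩

open Classical in
noncomputable def pointCode [Fintype ι] (U : ι → Set (EuclideanSpace ℝ (Fin d)))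
    (u : EuclideanSpace ℝ (Fin d)) : Finset ι :=
  {i | u ∈ U i}

section PointCode

variable [Fintype ι] {u : EuclideanSpace ℝ (Fin d)}

theorem mem_pointCode {i : ι} : i ∈ pointCode U u ↔ u ∈ U i := by
  simp [pointCode]

theorem mem_USet_iff_subset_pointCode {σ : Finset ι} : u ∈ USet U σ ↔ σ ⊆ pointCode U u := by
  simp [mem_USet, Finset.subset_iff, mem_pointCode]

theorem IsRealization.pointCode_mem (hR : IsRealization C U) (u : EuclideanSpace ℝ (Fin d)) :
    pointCode U u ∈ C :=
  (hR.2 _).2 ⟨u, mem_USet_iff_subset_pointCode.2 subset_rfl, by simp [mem_pointCode]⟩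

theorem IsRealization.pointCode_mem_trunk (hR : IsRealization C U) {σ : Finset ι}
    (hu : u ∈ USet U σ) : pointCode U u ∈ trunk C σ :=
  ⟨hR.pointCode_mem u, mem_USet_iff_subset_pointCode.1 hu⟩

theorem IsRealization.USet_eq_of_trunk_eq (hR : IsRealization C U) {σ τ : Finset ι}
    (h : trunk C σ = trunk C τ) : USet U σ = USet U τ := by
  ext u
  simp only [mem_USet_iff_subset_pointCode]
  constructor
  · exact fun hσ => (h ▸ ⟨hR.pointCode_mem u, hσ⟩ : pointCode U u ∈ trunk C τ).2
  · exact fun hτ => (h ▸ ⟨hR.pointCode_mem u, hτ⟩ : pointCode U u ∈ trunk C σ).2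

theorem IsRealization.USet_eq_empty (hR : IsRealization C U) {σ : Finset ι}
    (hσ : σ ∉ neuralComplex C) : USet U σ = ∅ :=
  eq_empty_of_forall_notMem fun u hu =>
    hσ ⟨_, hR.pointCode_mem u, mem_USet_iff_subset_pointCode.1 hu⟩

theorem IsRealization.USet_subset_biUnion (hR : IsRealization C U) {σ : Finset ι}
    {s : Finset ι} (h : trunk C σ ⊆ ⋃ i ∈ s, trunk C {i}) : USet U σ ⊆ ⋃ i ∈ s, U i := by
  intro u hu
  obtain ⟨i, hi, hic⟩ := mem_iUnion₂.1 (h (hR.pointCode_mem_trunk hu))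
  exact mem_iUnion₂.2 ⟨i, hi, mem_pointCode.1 (hic.2 (Finset.mem_singleton_self i))⟩

end PointCode

theorem not_isWheelOfRealization_of_convex (hUo : ∀ i, IsOpen (U i))
    (hUc : ∀ i, Convex ℝ (U i)) (σ1 σ2 σ3 τ : Finset ι) :
    ¬IsWheelOfRealization U σ1 σ2 σ3 τ := by
  rintro ⟨⟨h12, -, h23, q, hq⟩, hii, hiii⟩
  have hconv := convex_USet hUc
  obtain ⟨x, hx, y, hy, z, hzxy, hz2, hzτ⟩ :=
    hiii ⟨hconv τ, (hconv σ1).inter (hconv τ), (hconv σ2).inter (hconv τ),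
      (hconv σ3).inter (hconv τ)⟩
  have hz1 : z ∈ USet U σ1 := by
    refine mem_of_mem_segment_of_inter_subset (isOpen_USet hUo σ1) (isOpen_USet hUo σ2)
      (hconv σ1) (hconv σ3) (hconv σ2) ?_ ?_ ⟨⟨hq.1.1, hq.2⟩, hq.1.2⟩ hx.1 hy.1 hz2 hzxy
    · rw [inter_comm, h12]
      exact inter_subset_right
    · rw [h23]
      exact fun p hp => hp.1.1
  have hz : z ∈ USet U σ1 ∩ USet U σ2 ∩ USet U σ3 ∩ USet U τ := ⟨h12 ▸ ⟨hz1, hz2⟩, hzτ⟩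
  rwa [hii] at hz

namespace IsWheelFrame

variable [DecidableEq ι] {σ1 σ3 τ : Finset ι}

theorem left_nonempty (hF : IsWheelFrame C σ1 σ3 τ) : σ1.Nonempty := by
  obtain ⟨-, -, -, -, hnot, -, h3τ, -⟩ := hF
  refine Finset.nonempty_iff_ne_empty.2 fun h => hnot ?_
  simpa [h, Finset.union_comm] using h3τ

theorem right_nonempty (hF : IsWheelFrame C σ1 σ3 τ) : σ3.Nonempty := by
  obtain ⟨-, -, -, -, hnot, h1τ, -⟩ := hF
  refine Finset.nonempty_iff_ne_empty.2 fun h => hnot ?_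
  simpa [h, Finset.union_comm] using h1τ

variable [Fintype ι]

theorem wheelWi_wheelWii (hF : IsWheelFrame C σ1 σ3 τ) (hR : IsRealization C U)
    {σ2 : Finset ι} (h1 : trunk C (σ1 ∪ σ2) = trunk C (σ1 ∪ σ3))
    (h3 : trunk C (σ3 ∪ σ2) = trunk C (σ1 ∪ σ3)) :
    WheelWi U σ1 σ2 σ3 ∧ WheelWii U σ1 σ2 σ3 τ := by
  obtain ⟨-, -, -, ⟨h13, -⟩, hnot, -⟩ := hF
  have h12 : USet U σ1 ∩ USet U σ2 = USet U (σ1 ∪ σ3) := by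
    rw [← USet_union, hR.USet_eq_of_trunk_eq h1]
  have h32 : USet U σ3 ∩ USet U σ2 = USet U (σ1 ∪ σ3) := by
    rw [← USet_union, hR.USet_eq_of_trunk_eq h3]
  have h123 : USet U σ1 ∩ USet U σ2 ∩ USet U σ3 = USet U (σ1 ∪ σ3) := by
    rw [h12, inter_eq_left]
    exact USet_anti Finset.subset_union_right
  unfold WheelWi WheelWii
  refine ⟨⟨?_, ?_, ?_, ?_⟩, ?_⟩ <;> rw [h123]
  · exact h12
  · exact (USet_union σ1 σ3).symm
  · rw [inter_comm, h32]
  · exact hR.USet_nonempty h13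
  · rw [← USet_union]
    exact hR.USet_eq_empty (by simpa [Finset.union_comm, Finset.union_left_comm] using hnot)

theorem exists_mem_segment_mem_left_right (hF : IsWheelFrame C σ1 σ3 τ) (hR : IsRealization C U)
    (hτ : Convex ℝ (USet U τ)) :
    ∃ x ∈ USet U σ1 ∩ USet U τ, ∃ y ∈ USet U σ3 ∩ USet U τ, ∃ z ∈ segment ℝ x y,
      z ∈ USet U τ ∧ (∃ i ∈ σ1, z ∈ U i) ∧ ∃ j ∈ σ3, z ∈ U j := by
  obtain ⟨i, hi⟩ := hF.left_nonempty
  obtain ⟨j, hj⟩ := hF.right_nonempty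
  obtain ⟨-, -, -, -, -, h1τ, h3τ, -, hcover⟩ := hF
  obtain ⟨x, hx⟩ := hR.USet_nonempty h1τ
  obtain ⟨y, hy⟩ := hR.USet_nonempty h3τ
  rw [USet_union] at hx hy
  have hseg : segment ℝ x y ⊆ USet U τ := hτ.segment_subset hx.2 hy.2
  have hsplit : segment ℝ x y ⊆ (⋃ i ∈ σ1, U i) ∪ ⋃ j ∈ σ3, U j := by
    rw [← Finset.set_biUnion_union]
    exact hseg.trans (hR.USet_subset_biUnion hcover)
  obtain ⟨z, hzxy, hz1, hz3⟩ := (convex_segment x y).isPreconnected _ _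
    (isOpen_biUnion fun i _ => hR.1 i) (isOpen_biUnion fun j _ => hR.1 j) hsplit
    ⟨x, left_mem_segment ℝ x y, mem_biUnion hi (mem_USet.1 hx.1 i hi)⟩
    ⟨y, right_mem_segment ℝ x y, mem_biUnion hj (mem_USet.1 hy.1 j hj)⟩
  exact ⟨x, hx, y, hy, z, hzxy, hseg hzxy, by simpa using hz1, by simpa using hz3⟩

theorem exists_mixed_face (hF : IsWheelFrame C σ1 σ3 τ) (hR : IsRealization C U)
    (hτ : Convex ℝ (USet U τ)) :
    ∃ ω : Finset ι, (ω ⊆ σ1 ∪ σ3 ∧ ¬ω ⊆ σ1 ∧ ¬ω ⊆ σ3 ∧ ω ∪ τ ∈ neuralComplex C) ∧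
      ∃ x ∈ USet U σ1 ∩ USet U τ, ∃ y ∈ USet U σ3 ∩ USet U τ,
        (segment ℝ x y ∩ (USet U ω ∩ USet U τ)).Nonempty := by
  obtain ⟨x, hx, y, hy, z, hzxy, hzτ, ⟨i, hi, hzi⟩, j, hj, hzj⟩ :=
    hF.exists_mem_segment_mem_left_right hR hτ
  obtain ⟨-, -, -, -, -, -, -, h13, -⟩ := hF
  have hdisj : Disjoint σ1 σ3 := Finset.disjoint_iff_inter_eq_empty.2 h13
  refine ⟨(σ1 ∪ σ3) ∩ pointCode U z, ⟨Finset.inter_subset_left, fun h => ?_, fun h => ?_, ?_⟩,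
    x, hx, y, hy, z, hzxy, ?_, hzτ⟩
  · exact Finset.disjoint_left.1 hdisj (h (by simp [hj, mem_pointCode.2 hzj])) hj
  · exact Finset.disjoint_left.1 hdisj hi (h (by simp [hi, mem_pointCode.2 hzi]))
  · exact ⟨_, hR.pointCode_mem z, Finset.union_subset Finset.inter_subset_right
      (mem_USet_iff_subset_pointCode.1 hzτ)⟩
  · exact mem_USet_iff_subset_pointCode.2 Finset.inter_subset_right

theorem exists_isWheelOfRealization (hF : IsWheelFrame C σ1 σ3 τ) (hR : IsRealization C U) :
    ∃ σ2, IsWheelOfRealization U σ1 σ2 σ3 τ := by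
  by_cases hτ : Convex ℝ (USet U τ)
  · obtain ⟨ω, ⟨hωs, hω1, hω3, hωτ⟩, hseg⟩ := hF.exists_mixed_face hR hτ
    obtain ⟨h1, h3⟩ := hF.2.2.2.1.2 ω hωs hω1 hω3 hωτ
    obtain ⟨hi, hii⟩ := hF.wheelWi_wheelWii hR h1 h3
    exact ⟨ω, hi, hii, fun _ => hseg⟩
  · obtain ⟨hi, hii⟩ := hF.wheelWi_wheelWii (U := U) hR (σ2 := σ1 ∪ σ3)
      (by rw [← Finset.union_assoc, Finset.union_self])
      (by rw [Finset.union_comm σ1, ← Finset.union_assoc, Finset.union_self, Finset.union_comm])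
    exact ⟨σ1 ∪ σ3, hi, hii, fun h => absurd h.1 hτ⟩

end IsWheelFrame

end NeuralCode

open NeuralCode

/-- a wheel frame generates, in every realization, a wheel
(for some middle spoke `σ2`); consequently codes with wheel frames are non-convex. -/
theorem wheel_frame_generates_wheel {n : ℕ} (C : Set (Finset (Fin n)))
    (σ1 σ3 τ : Finset (Fin n)) (hF : IsWheelFrame C σ1 σ3 τ) :
    (∀ (d : ℕ) (U : Fin n → Set (EuclideanSpace ℝ (Fin d))), IsRealization C U →
        ∃ σ2 : Finset (Fin n),
          WheelWi U σ1 σ2 σ3 ∧ WheelWii U σ1 σ2 σ3 τ ∧ WheelWiii U σ1 σ2 σ3 τ) ∧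
    ¬IsConvexCode C := by
  have hwheel : ∀ (d : ℕ) (U : Fin n → Set (EuclideanSpace ℝ (Fin d))), IsRealization C U →
      ∃ σ2, IsWheelOfRealization U σ1 σ2 σ3 τ :=
    fun _ _ hR => hF.exists_isWheelOfRealization hR
  refine ⟨hwheel, ?_⟩
  rintro ⟨d, U, hR, hUc⟩
  obtain ⟨σ2, hW⟩ := hwheel d U hR
  exact not_isWheelOfRealization_of_convex hR.1 hUc σ1 σ2 σ3 τ hW
end

section
/- If a code C on n neurons has a wheel frame, then C has a wheel frame (σ1, σ3, τ̃) in which τ̃ is a max-intersection face of Δ(C): τ̃ equals the intersection of two or more distinct facets of Δ(C). -/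
open NeuralCode

namespace NeuralCode

variable {ι : Type*} {C : Set (Finset ι)}

theorem mem_neuralComplex_of_subset {σ σ' : Finset ι} (hσ' : σ' ∈ neuralComplex C)
    (h : σ ⊆ σ') : σ ∈ neuralComplex C :=
  let ⟨c, hc, hσ'c⟩ := hσ'
  ⟨c, hc, h.trans hσ'c⟩

theorem trunk_anti {σ σ' : Finset ι} (h : σ ⊆ σ') : trunk C σ' ⊆ trunk C σ :=
  fun _ hc => ⟨hc.1, h.trans hc.2⟩

theorem exists_isFacet_superset [Finite ι] {c : Finset ι} (hc : c ∈ C) :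
    ∃ F, IsFacet C F ∧ c ⊆ F := by
  obtain ⟨F, ⟨hFC, hcF⟩, hmax⟩ :=
    (Set.toFinite {d | d ∈ C ∧ c ⊆ d}).exists_maximalFor Finset.card _ ⟨c, hc, subset_rfl⟩
  refine ⟨F, ⟨hFC, fun d hd hFd => ?_⟩, hcF⟩
  exact (Finset.eq_of_subset_of_card_le hFd
    (hmax ⟨hd, hcF.trans hFd⟩ (Finset.card_le_card hFd))).symm

theorem isMaxIntersectionFace_inter [DecidableEq ι] [Fintype ι] {F₁ F₂ : Finset ι}
    (h₁ : IsFacet C F₁) (h₂ : IsFacet C F₂) (hne : F₁ ≠ F₂) :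
    IsMaxIntersectionFace C (F₁ ∩ F₂) := by
  refine ⟨⟨F₁, h₁.1, Finset.inter_subset_left⟩, {F₁, F₂}, (Finset.card_pair hne).ge, ?_, ?_⟩
  · simp only [Finset.mem_insert, Finset.mem_singleton]
    rintro F (rfl | rfl) <;> assumption
  · simp

theorem IsWheelFrame.of_subset [DecidableEq ι] {σ₁ σ₃ τ τ' : Finset ι}
    (hW : IsWheelFrame C σ₁ σ₃ τ) (hττ' : τ ⊆ τ') (h₁ : σ₁ ∪ τ' ∈ neuralComplex C)
    (h₃ : σ₃ ∪ τ' ∈ neuralComplex C) : IsWheelFrame C σ₁ σ₃ τ' := by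
  obtain ⟨hσ₁, hσ₃, -, ⟨hσ₁₃, htrunk⟩, hii, -, -, hdisj, hcover⟩ := hW
  refine ⟨hσ₁, hσ₃, mem_neuralComplex_of_subset h₁ Finset.subset_union_right,
    ⟨hσ₁₃, fun ω hω hω₁ hω₃ hωτ' => htrunk ω hω hω₁ hω₃ ?_⟩, fun hτ' => hii ?_,
    h₁, h₃, hdisj, (trunk_anti hττ').trans hcover⟩
  · exact mem_neuralComplex_of_subset hωτ' (Finset.union_subset_union_right hττ')
  · exact mem_neuralComplex_of_subset hτ' (by gcongr)

end NeuralCode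

open NeuralCode

/-- bubble-up property for wheel frames. -/
theorem wheel_frame_bubbles_up {n : ℕ} (C : Set (Finset (Fin n)))
    (h : ∃ σ1 σ3 τ : Finset (Fin n), IsWheelFrame C σ1 σ3 τ) :
    ∃ σ1 σ3 τ : Finset (Fin n), IsWheelFrame C σ1 σ3 τ ∧ IsMaxIntersectionFace C τ := by
  obtain ⟨σ1, σ3, τ, hW⟩ := h
  obtain ⟨-, -, -, -, hii, ⟨c₁, hc₁, hc₁sub⟩, ⟨c₃, hc₃, hc₃sub⟩, -⟩ := id hW
  obtain ⟨F₁, hF₁, hc₁F₁⟩ := exists_isFacet_superset hc₁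
  obtain ⟨F₃, hF₃, hc₃F₃⟩ := exists_isFacet_superset hc₃
  have h₁ : σ1 ∪ τ ⊆ F₁ := hc₁sub.trans hc₁F₁
  have h₃ : σ3 ∪ τ ⊆ F₃ := hc₃sub.trans hc₃F₃
  have hne : F₁ ≠ F₃ := by
    rintro rfl
    refine hii ⟨F₁, hF₁.1, ?_⟩
    grind [Finset.union_subset_iff]
  have hτ : τ ⊆ F₁ ∩ F₃ :=
    Finset.subset_inter (Finset.union_subset_right h₁) (Finset.union_subset_right h₃)
  refine ⟨σ1, σ3, F₁ ∩ F₃, hW.of_subset hτ ?_ ?_, isMaxIntersectionFace_inter hF₁ hF₃ hne⟩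
  · exact ⟨F₁, hF₁.1, Finset.union_subset (Finset.union_subset_left h₁) Finset.inter_subset_left⟩
  · exact ⟨F₃, hF₃.1, Finset.union_subset (Finset.union_subset_left h₃) Finset.inter_subset_right⟩
end
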